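/- If for each j, g_j ≤ g_max < G and ñ_j·α̃_j ≤ ρ·workload_j with Σ_{j≤i} (g_j/G)·workload_j ≤ C_i, then Σ_{j=1}^{i} g_j·n_j·α_j^max/(G−g_max) ≤ (ρG/(G−g_max))·C_i + (g_max·α_max/(G−g_max))·Σ_j ε_j under n_j ≤ ñ_j + ε_j and α_j^max ≤ α_max, α_j^max·ñ_j·g_j ≤ ρ·G·(g_j/G)·ñ_j·α̃_j^min. -/
import Mathlib


/-- the key summation bound inside the proof of Lemma 2. -/
theorem stmt6 (i : ℕ) (G gmax ρ αmax : ℝ)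
    (hgmax : 0 < gmax) (hG : gmax < G) (hρ : 1 ≤ ρ) (hαmax : 0 < αmax)
    (g n nt ε αjmax αtmin : Fin i → ℝ)
    (hg : ∀ j, 0 < g j) (hgle : ∀ j, g j ≤ gmax)
    (hn : ∀ j, 0 ≤ n j) (hnt : ∀ j, 0 ≤ nt j) (hε : ∀ j, 0 ≤ ε j)
    (hunder : ∀ j, n j ≤ nt j + ε j)
    (hαj : ∀ j, 0 < αjmax j) (hαjle : ∀ j, αjmax j ≤ αmax)
    (hαt : ∀ j, 0 < αtmin j) (hρbound : ∀ j, αjmax j ≤ ρ * αtmin j)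
    (Ci : ℝ) (hCi : ∑ j, (g j / G) * nt j * αtmin j ≤ Ci) :
    ∑ j, g j * n j * αjmax j / (G - gmax)
      ≤ (ρ * G / (G - gmax)) * Ci + (gmax * αmax / (G - gmax)) * ∑ j, ε j := by
  have hGpos : (0:ℝ) < G := hgmax.trans hG
  have hden : (0:ℝ) < G - gmax := by linarith
  have key : ∀ j, g j * n j * αjmax j
      ≤ ρ * G * ((g j / G) * nt j * αtmin j) + gmax * αmax * ε j := by
    intro j
    have h1 : g j * n j * αjmax j ≤ g j * (nt j + ε j) * αjmax j := by
      gcongr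
      all_goals first | exact (hg j).le | exact (hαj j).le | exact hunder j
    have h2 : g j * nt j * αjmax j ≤ ρ * G * ((g j / G) * nt j * αtmin j) := by
      have hq : ρ * G * ((g j / G) * nt j * αtmin j) = g j * nt j * (ρ * αtmin j) := by
        field_simp
      rw [hq]
      gcongr
      all_goals first | exact mul_nonneg (hg j).le (hnt j) | exact hρbound j | positivity
    have h3 : g j * ε j * αjmax j ≤ gmax * αmax * ε j := by
      have : g j * ε j * αjmax j = g j * αjmax j * ε j := by ring
      rw [this]
      gcongr
      all_goals first | exact hε j | exact (hg j).le | exact hgle j | exact hαjle j | exact (hαj j).le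
    nlinarith
  have hsum : ∑ j, g j * n j * αjmax j
      ≤ ρ * G * Ci + gmax * αmax * ∑ j, ε j := by
    calc ∑ j, g j * n j * αjmax j
        ≤ ∑ j, (ρ * G * ((g j / G) * nt j * αtmin j) + gmax * αmax * ε j) :=
          Finset.sum_le_sum fun j _ => key j
      _ = ρ * G * (∑ j, (g j / G) * nt j * αtmin j) + gmax * αmax * ∑ j, ε j := by
          rw [Finset.sum_add_distrib, ← Finset.mul_sum, ← Finset.mul_sum]
      _ ≤ ρ * G * Ci + gmax * αmax * ∑ j, ε j := by
          have : (0:ℝ) ≤ ρ * G := by positivity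
          nlinarith [mul_le_mul_of_nonneg_left hCi this]
  rw [← Finset.sum_div]
  rw [div_le_iff₀ hden]
  have : (ρ * G / (G - gmax)) * Ci + (gmax * αmax / (G - gmax)) * ∑ j, ε j
      = (ρ * G * Ci + gmax * αmax * ∑ j, ε j) / (G - gmax) := by
    field_simp
  rw [this, div_mul_cancel₀ _ (ne_of_gt hden)]
  exact hsum
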